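/- arXiv:math/0301366 — 7 statements merged into one kernel-verified Lean document; each statement's English description precedes it below -/
import Mathlib

section
/- Let $e_0, e_1, e_2, \ldots$ be a sequence of positive integers such that $e_n = 1$ for all sufficiently large $n$, and such that for every $i \geq 0$ there exists $k \geq 1$ with $e_i = \sum_{h=1}^{k} e_{i+h}$. Then the set $S = \{0, e_0, e_0+e_1, e_0+e_1+e_2, \ldots\}$ of partial sums is an Arf numerical semigroup. -/
/-- A numerical semigroup: an additive submonoid of ℕ with finite complement. -/
def IsNumericalSemigroup (S : Set ℕ) : Prop :=
  0 ∈ S ∧ (∀ a ∈ S, ∀ b ∈ S, a + b ∈ S) ∧ Sᶜ.Finite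

/-- `S` is Arf: for every `s ∈ S`, the set `{n - s : n ∈ S, n ≥ s}` is closed under
addition, i.e. for all `x, y ∈ S` with `x, y ≥ s` one has `x + y - s ∈ S`. -/
def IsArfNS (S : Set ℕ) : Prop :=
  ∀ s ∈ S, ∀ x ∈ S, ∀ y ∈ S, s ≤ x → s ≤ y → x + y - s ∈ S

namespace ArfAux

variable {e : ℕ → ℕ}

def P (e : ℕ → ℕ) (n : ℕ) : ℕ := ∑ i ∈ Finset.range n, e i

lemma P_succ (e : ℕ → ℕ) (n : ℕ) : P e (n + 1) = P e n + e n :=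
  Finset.sum_range_succ e n

lemma P_mono (hpos : ∀ i, 0 < e i) : StrictMono (P e) :=
  strictMono_nat_of_lt_succ fun n => by
    rw [P_succ]; exact Nat.lt_add_of_pos_right (hpos n)

lemma P_add (e : ℕ → ℕ) (a k : ℕ) :
    P e (a + k) = P e a + ∑ i ∈ Finset.range k, e (a + i) :=
  Finset.sum_range_add e a k

lemma addE (N : ℕ) (hev : ∀ n, N ≤ n → e n = 1)
    (hsum : ∀ i, ∃ k, 1 ≤ k ∧ e i = ∑ h ∈ Finset.Icc 1 k, e (i + h)) :
    ∀ d n m, N ≤ n + d → n < m → ∃ m', m < m' ∧ P e m + e n = P e m' := by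
  intro d
  induction d with
  | zero =>
    intro n m hN hm
    exact ⟨m + 1, Nat.lt_succ_self m, by rw [P_succ, hev n (by omega), hev m (by omega)]⟩
  | succ d ih =>
    intro n m hN hm
    by_cases hn : N ≤ n
    · exact ⟨m + 1, Nat.lt_succ_self m, by rw [P_succ, hev n hn, hev m (by omega)]⟩
    · obtain ⟨k, hk1, hke⟩ := hsum n
      have hsum' : e n = ∑ i ∈ Finset.range k, e (n + 1 + i) := by
        rw [hke, ← Finset.Ico_add_one_right_eq_Icc, Finset.sum_Ico_eq_sum_range]
        simp [Nat.add_assoc]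
      rcases Nat.lt_or_ge (n + 1) m with hm2 | hm2
      · have main : ∀ j, j ≤ k → ∃ M, m + j ≤ M ∧
            P e m + ∑ i ∈ Finset.range j, e (n + 1 + i) = P e M := by
          intro j
          induction j with
          | zero => intro _; exact ⟨m, by omega, by simp⟩
          | succ j ihj =>
            intro hj
            obtain ⟨M, hM, hMe⟩ := ihj (by omega)
            obtain ⟨M', hM', hM'e⟩ := ih (n + 1 + j) M (by omega) (by omega)
            exact ⟨M', by omega, by rw [Finset.sum_range_succ, ← add_assoc, hMe, hM'e]⟩
        obtain ⟨M, hM, hMe⟩ := main k le_rfl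
        exact ⟨M, by omega, by rw [hsum', hMe]⟩
      · have hm' : m = n + 1 := by omega
        refine ⟨n + 1 + k, by omega, ?_⟩
        rw [hm', hsum', ← P_add]

lemma add_closed (N : ℕ) (hev : ∀ n, N ≤ n → e n = 1)
    (hsum : ∀ i, ∃ k, 1 ≤ k ∧ e i = ∑ h ∈ Finset.Icc 1 k, e (i + h)) :
    ∀ a b, ∃ c, a ≤ c ∧ b ≤ c ∧ P e a + P e b = P e c := by
  intro a
  induction a with
  | zero => intro b; exact ⟨b, Nat.zero_le b, le_rfl, by simp [P]⟩
  | succ a ih =>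
    intro b
    obtain ⟨c, hac, hbc, hc⟩ := ih b
    rcases eq_or_lt_of_le hac with h | h
    · refine ⟨a + 1, le_rfl, by omega, ?_⟩
      have h1 := P_succ e a
      have h2 : P e a = P e c := by rw [h]
      omega
    · obtain ⟨c', hc', hc'e⟩ := addE N hev hsum N a c (by omega) h
      exact ⟨c', by omega, by omega, by rw [P_succ, add_right_comm, hc, hc'e]⟩

lemma arf_key (N : ℕ) (hev : ∀ n, N ≤ n → e n = 1)
    (hsum : ∀ i, ∃ k, 1 ≤ k ∧ e i = ∑ h ∈ Finset.Icc 1 k, e (i + h)) :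
    ∀ D n m l, m - n ≤ D → n ≤ m → n ≤ l →
      ∃ c, P e m + P e l = P e n + P e c := by
  intro D
  induction D with
  | zero =>
    intro n m l hD hnm hnl
    have : m = n := by omega
    exact ⟨l, by rw [this]⟩
  | succ D ih =>
    intro n m l hD hnm hnl
    rcases eq_or_lt_of_le hnm with h | h
    · exact ⟨l, by rw [h]⟩
    · rcases eq_or_lt_of_le hnl with h' | h'
      · exact ⟨m, by rw [h', add_comm]⟩
      · obtain ⟨l', hl', hl'e⟩ := addE N hev hsum N n l (by omega) h'
        obtain ⟨c, hc⟩ := ih (n + 1) m l' (by omega) (by omega) (by omega)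
        refine ⟨c, ?_⟩
        have h1 : P e (n + 1) = P e n + e n := P_succ e n
        omega

end ArfAux

theorem partial_sums_of_multiplicity_sequence_is_Arf (e : ℕ → ℕ)
    (hpos : ∀ i, 0 < e i) (hev : ∃ N, ∀ n, N ≤ n → e n = 1)
    (hsum : ∀ i, ∃ k, 1 ≤ k ∧ e i = ∑ h ∈ Finset.Icc 1 k, e (i + h)) :
    IsNumericalSemigroup (Set.range fun n => ∑ i ∈ Finset.range n, e i) ∧
    IsArfNS (Set.range fun n => ∑ i ∈ Finset.range n, e i) := by
  obtain ⟨N, hev⟩ := hev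
  have hrange : (Set.range fun n => ∑ i ∈ Finset.range n, e i) = Set.range (ArfAux.P e) := rfl
  rw [hrange]
  have hmono := ArfAux.P_mono hpos
  constructor
  · refine ⟨⟨0, by simp [ArfAux.P]⟩, ?_, ?_⟩
    · rintro a ⟨m, rfl⟩ b ⟨l, rfl⟩
      obtain ⟨c, _, _, hc⟩ := ArfAux.add_closed N hev hsum m l
      exact ⟨c, hc.symm⟩
    · apply Set.Finite.subset (Set.finite_Iio (ArfAux.P e N))
      intro x hx
      simp only [Set.mem_compl_iff, Set.mem_range] at hx
      by_contra hxx
      have hge : ArfAux.P e N ≤ x := by simpa [Set.mem_Iio] using hxx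
      apply hx
      refine ⟨N + (x - ArfAux.P e N), ?_⟩
      rw [ArfAux.P_add]
      have : ∑ i ∈ Finset.range (x - ArfAux.P e N), e (N + i)
          = ∑ i ∈ Finset.range (x - ArfAux.P e N), 1 :=
        Finset.sum_congr rfl fun i _ => hev (N + i) (by omega)
      rw [this, Finset.sum_const, Finset.card_range, smul_eq_mul, mul_one]
      omega
  · rintro s ⟨n, rfl⟩ x ⟨m, rfl⟩ y ⟨l, rfl⟩ hsx hsy
    have hnm : n ≤ m := hmono.le_iff_le.mp hsx
    have hnl : n ≤ l := hmono.le_iff_le.mp hsy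
    obtain ⟨c, hc⟩ := ArfAux.arf_key N hev hsum (m - n) n m l le_rfl hnm hnl
    exact ⟨c, by omega⟩
end

section
/- Let $S = \{s_0 = 0 < s_1 < s_2 < \cdots\}$ be an Arf numerical semigroup with multiplicity sequence $e_i = s_{i+1} - s_i$. Then for every $i \geq 0$ there exists $k \geq 1$ such that $e_i = \sum_{h=1}^{k} e_{i+h}$. -/
lemma telescope (s : ℕ → ℕ) (hmono : StrictMono s) (i : ℕ) :
    ∀ k, ∑ h ∈ Finset.Icc 1 k, (s (i + h + 1) - s (i + h)) = s (i + k + 1) - s (i + 1) := by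
  intro k
  induction k with
  | zero => simp
  | succ k ih =>
    rw [Finset.sum_Icc_succ_top (by omega), ih]
    have h1 : s (i + 1) ≤ s (i + k + 1) := hmono.monotone (by omega)
    have h2 : s (i + k + 1) ≤ s (i + (k + 1)) := hmono.monotone (by omega)
    have h3 : s (i + (k + 1)) ≤ s (i + (k + 1) + 1) := hmono.monotone (by omega)
    have h4 : s (i + (k + 1)) = s (i + k + 1) := by ring_nf
    omega

theorem multiplicity_sequence_sum_condition (S : Set ℕ)
    (hS : IsNumericalSemigroup S) (hArf : IsArfNS S)
    (s : ℕ → ℕ) (hmono : StrictMono s) (h0 : s 0 = 0) (hrange : Set.range s = S) :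
    ∀ i, ∃ k, 1 ≤ k ∧
      s (i + 1) - s i = ∑ h ∈ Finset.Icc 1 k, (s (i + h + 1) - s (i + h)) := by
  intro i
  have hsi : s i ∈ S := hrange ▸ Set.mem_range_self i
  have hsi1 : s (i + 1) ∈ S := hrange ▸ Set.mem_range_self (i + 1)
  have hle : s i ≤ s (i + 1) := (hmono (by omega)).le
  have hmem : s (i + 1) + s (i + 1) - s i ∈ S := hArf (s i) hsi _ hsi1 _ hsi1 hle hle
  rw [← hrange] at hmem
  obtain ⟨j, hj⟩ := hmem
  have hlt : s i < s (i + 1) := hmono (by omega)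
  have hjlt : s (i + 1) < s j := by omega
  have hji : i + 1 < j := hmono.lt_iff_lt.mp hjlt
  refine ⟨j - (i + 1), by omega, ?_⟩
  rw [telescope s hmono]
  have : i + (j - (i + 1)) + 1 = j := by omega
  rw [this]
  omega
end

section
/- Let $e_0, e_1, \ldots$ be the multiplicity sequence of an Arf numerical semigroup $S$ (so each $e_i$ equals a sum $\sum_{h=1}^{k} e_{i+h}$ for some $k \geq 1$). Define the restriction number $r(e_j)$ as the number of indices $i < j$ such that $e_i = e_{i+1} + \cdots + e_j + (\text{possibly more terms})$, i.e., the number of sums $e_i = \sum_{h=1}^{k} e_{i+h}$ in which $e_j$ appears as a summand. Then $r(e_j) < r(e_{j+1})$ if and only if there is no $k < j$ such that $e_k = e_{k+1} + \cdots + e_j$, and in that case $r(e_j) = r(e_{j+1}) - 1$. -/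
theorem restriction_number_lemma (e : ℕ → ℕ) (K : ℕ → ℕ)
    (hpos : ∀ i, 0 < e i) (hev : ∃ N, ∀ n, N ≤ n → e n = 1)
    (hK : ∀ i, 1 ≤ K i)
    (hsum : ∀ i, e i = ∑ h ∈ Finset.Icc 1 (K i), e (i + h))
    (huniq : ∀ i k', 1 ≤ k' → e i = ∑ h ∈ Finset.Icc 1 k', e (i + h) → k' = K i)
    (r : ℕ → ℕ)
    (hr : ∀ j, r j = ((Finset.range j).filter (fun i => j ≤ i + K i)).card)
    (j : ℕ) :
    (r j < r (j + 1) ↔ ¬ ∃ m < j, e m = ∑ h ∈ Finset.Icc (m + 1) j, e h) ∧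
    (r j < r (j + 1) → r j = r (j + 1) - 1) := by
  classical
  set C := (Finset.range j).filter (fun i => j + 1 ≤ i + K i) with hC
  set B := (Finset.range j).filter (fun i => i + K i = j) with hB
  have reindex : ∀ m, m ≤ j → ∑ h ∈ Finset.Icc (m+1) j, e h
      = ∑ h ∈ Finset.Icc 1 (j-m), e (m+h) := by
    intro m hm
    rw [show Finset.Icc (m+1) j = Finset.map (addLeftEmbedding m) (Finset.Icc 1 (j-m)) by
      rw [Finset.map_add_left_Icc]; congr 1; omega, Finset.sum_map]
    rfl
  have hrj : r j = C.card + B.card := by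
    rw [hr j]
    have hsplit : (Finset.range j).filter (fun i => j ≤ i + K i) = C ∪ B := by
      ext i
      simp only [hC, hB, Finset.mem_union, Finset.mem_filter, Finset.mem_range]
      omega
    rw [hsplit, Finset.card_union_of_disjoint]
    rw [Finset.disjoint_filter]
    intro i _ h1 h2
    omega
  have hrj1 : r (j+1) = C.card + 1 := by
    rw [hr (j+1)]
    have : (Finset.range (j+1)).filter (fun i => j + 1 ≤ i + K i) = insert j C := by
      ext i
      have := hK i
      simp only [hC, Finset.mem_insert, Finset.mem_filter, Finset.mem_range]
      omega
    rw [this, Finset.card_insert_of_notMem]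
    simp [hC]
  have hequiv : (∃ m < j, e m = ∑ h ∈ Finset.Icc (m + 1) j, e h) ↔ B.Nonempty := by
    constructor
    · rintro ⟨m, hm, hme⟩
      refine ⟨m, ?_⟩
      simp only [hB, Finset.mem_filter, Finset.mem_range]
      have h1 : j - m = K m := huniq m (j - m) (by omega)
        (by rw [← reindex m (le_of_lt hm)]; exact hme)
      exact ⟨hm, by omega⟩
    · rintro ⟨m, hm⟩
      simp only [hB, Finset.mem_filter, Finset.mem_range] at hm
      refine ⟨m, hm.1, ?_⟩
      rw [reindex m (le_of_lt hm.1), show j - m = K m by omega]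
      exact hsum m
  constructor
  · rw [hrj, hrj1, hequiv, Finset.nonempty_iff_ne_empty, not_not,
      ← Finset.card_eq_zero]
    omega
  · rw [hrj, hrj1]; omega
end

section
/- For each $k \geq 0$, let $S(k)$ be the Arf closure of the numerical semigroup generated by $\{2^k,\ 2^k + 2^{k-1},\ \ldots,\ 2^k + 2^{k-1} + \cdots + 2 + 1\}$ (i.e., by $2^{k+1} - 2^{k-i}$ for $0 \leq i \leq k$, where the last generator is $2^{k+1}-1$). Then the minimal Arf system of generators of $S(k)$ has exactly $k+1$ elements, i.e., $\mathrm{Arfrank}(S(k)) = k+1$. -/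
/-- The Arf closure of a set `A ⊆ ℕ`: the intersection of all Arf numerical
semigroups containing `A`. -/
def ArfClosure (A : Set ℕ) : Set ℕ :=
  ⋂₀ {T | IsNumericalSemigroup T ∧ IsArfNS T ∧ A ⊆ T}

/-!
For every `d` and `M`, the set `dℕ ∪ [M, ∞)` is an Arf numerical semigroup. Write the
generators as `g m = 2^(k+1) - 2^m` with `m ≤ k`. All of them lie in `2^m ℕ ∪ [g m, ∞)`,
while `g m` itself avoids `2^(m+1) ℕ ∪ [g m + 1, ∞)`. A set `A` with the same Arf closure
lies in exactly the same Arf numerical semigroups, so it must contain an element of `2`-adic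
valuation exactly `m`, for each `m ≤ k`; hence `|A| ≥ k + 1`, and the generators attain this.
-/

def multiplesOrGe (d M : ℕ) : Set ℕ := {n | d ∣ n ∨ M ≤ n}

theorem isNumericalSemigroup_multiplesOrGe (d M : ℕ) :
    IsNumericalSemigroup (multiplesOrGe d M) := by
  refine ⟨Or.inl (dvd_zero d), ?_, (Set.finite_Iio M).subset fun n hn => ?_⟩
  · rintro a (ha | ha) b (hb | hb)
    · exact Or.inl (dvd_add ha hb)
    all_goals exact Or.inr (by omega)
  · exact not_le.1 fun h => hn (Or.inr h)

theorem isArfNS_multiplesOrGe (d M : ℕ) : IsArfNS (multiplesOrGe d M) := by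
  rintro s hs x (hx | hx) y (hy | hy) hsx hsy
  · rcases hs with hs | hs
    · exact Or.inl (Nat.dvd_sub (dvd_add hx hy) hs)
    · exact Or.inr (by omega)
  all_goals exact Or.inr (by omega)

theorem arfClosure_subset_iff {A T : Set ℕ} (hT : IsNumericalSemigroup T) (hT' : IsArfNS T) :
    ArfClosure A ⊆ T ↔ A ⊆ T :=
  ⟨fun h _ ha => h fun _ hU => hU.2.2 ha, fun h => Set.sInter_subset_of_mem ⟨hT, hT', h⟩⟩

theorem exists_mem_dvd_not_dvd_of_arfClosure_eq {A B : Set ℕ}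
    (hAB : ArfClosure A = ArfClosure B) {d e g : ℕ} (hg : g ∈ B) (hdg : d ∣ g) (heg : ¬e ∣ g)
    (hB : B ⊆ multiplesOrGe d g) : ∃ a ∈ A, d ∣ a ∧ ¬e ∣ a := by
  have subset_iff (d M : ℕ) : A ⊆ multiplesOrGe d M ↔ B ⊆ multiplesOrGe d M := by
    rw [← arfClosure_subset_iff (isNumericalSemigroup_multiplesOrGe d M)
      (isArfNS_multiplesOrGe d M), hAB, arfClosure_subset_iff
      (isNumericalSemigroup_multiplesOrGe d M) (isArfNS_multiplesOrGe d M)]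
  have hA : A ⊆ multiplesOrGe d g := (subset_iff d g).2 hB
  have hA' : ¬A ⊆ multiplesOrGe e (g + 1) := fun h =>
    ((subset_iff e (g + 1)).1 h hg).elim heg (by omega)
  obtain ⟨a, ha, hae⟩ := Set.not_subset.1 hA'
  have ⟨hea, hag⟩ : ¬e ∣ a ∧ a < g + 1 := by simpa [multiplesOrGe] using hae
  refine ⟨a, ha, (hA ha).elim id fun hga => ?_, hea⟩
  rwa [show a = g by omega]

theorem succ_le_card_of_forall_exists_pow_dvd_not_dvd {p k : ℕ} (hp : p ≠ 1) {A : Finset ℕ}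
    (h : ∀ m ≤ k, ∃ a ∈ A, p ^ m ∣ a ∧ ¬p ^ (m + 1) ∣ a) : k + 1 ≤ A.card :=
  calc k + 1 = (Finset.Iic k).card := (Nat.card_Iic k).symm
    _ ≤ (A.image (padicValNat p)).card := Finset.card_le_card fun m hm => by
        obtain ⟨a, ha, hdvd, hndvd⟩ := h m (Finset.mem_Iic.1 hm)
        have ha0 : a ≠ 0 := by rintro rfl; exact hndvd (dvd_zero _)
        rw [padicValNat_dvd_iff_le_of_ne_one hp ha0] at hdvd hndvd
        exact Finset.mem_image.2 ⟨a, ha, by omega⟩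
    _ ≤ A.card := Finset.card_image_le

theorem not_two_pow_succ_dvd_two_pow_succ_sub_two_pow {k m : ℕ} (hm : m ≤ k) :
    ¬2 ^ (m + 1) ∣ 2 ^ (k + 1) - 2 ^ m := by
  obtain ⟨j, rfl⟩ := Nat.exists_eq_add_of_le hm
  have hfactor : 2 ^ (m + j + 1) - 2 ^ m = 2 ^ m * (2 * 2 ^ j - 1) := by
    rw [Nat.mul_sub, mul_one, ← mul_assoc, ← pow_succ, ← pow_add, add_right_comm]
  rw [hfactor, pow_succ, Nat.mul_dvd_mul_iff_left (by positivity)]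
  have := Nat.one_le_two_pow (n := j)
  omega

theorem image_two_pow_succ_sub_two_pow_subset (k m : ℕ) :
    (fun j => 2 ^ (k + 1) - 2 ^ j) '' Set.Iic k ⊆ multiplesOrGe (2 ^ m) (2 ^ (k + 1) - 2 ^ m) := by
  rintro _ ⟨j, hj, rfl⟩
  rcases le_total m j with hmj | hjm
  · exact Or.inl (Nat.dvd_sub (pow_dvd_pow 2 (hmj.trans (Nat.le_succ_of_le hj))) (pow_dvd_pow 2 hmj))
  · exact Or.inr (Nat.sub_le_sub_left (Nat.pow_le_pow_right two_pos hjm) _)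

theorem injOn_two_pow_succ_sub_two_pow (k : ℕ) :
    Set.InjOn (fun m => 2 ^ (k + 1) - 2 ^ m) (Set.Iic k) := by
  intro m hm j hj h
  have hm' := Nat.pow_le_pow_right two_pos (Nat.le_succ_of_le hm)
  have hj' := Nat.pow_le_pow_right two_pos (Nat.le_succ_of_le hj)
  exact Nat.pow_right_injective le_rfl (show 2 ^ m = 2 ^ j by simp only at h; omega)

theorem arfrank_of_Sk (k : ℕ) :
    (∃ A : Finset ℕ,
        ArfClosure ↑A = ArfClosure {n | ∃ i ≤ k, n = 2 ^ (k + 1) - 2 ^ (k - i)} ∧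
        A.card = k + 1) ∧
    ∀ A : Finset ℕ,
      ArfClosure ↑A = ArfClosure {n | ∃ i ≤ k, n = 2 ^ (k + 1) - 2 ^ (k - i)} →
      k + 1 ≤ A.card := by
  set g : ℕ → ℕ := fun m => 2 ^ (k + 1) - 2 ^ m
  have hG : {n | ∃ i ≤ k, n = 2 ^ (k + 1) - 2 ^ (k - i)} = g '' Set.Iic k := by
    ext n
    constructor
    · rintro ⟨i, hi, rfl⟩
      exact ⟨k - i, Set.mem_Iic.2 (Nat.sub_le k i), rfl⟩
    · rintro ⟨m, hm, rfl⟩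
      exact ⟨k - m, Nat.sub_le k m, by rw [Nat.sub_sub_self hm]⟩
  have hcoe : (((Finset.Iic k).image g : Finset ℕ) : Set ℕ) = g '' Set.Iic k := by
    rw [Finset.coe_image, Finset.coe_Iic]
  rw [hG]
  refine ⟨⟨(Finset.Iic k).image g, by rw [hcoe], ?_⟩, fun A hA => ?_⟩
  · rw [Finset.card_image_of_injOn (by rw [Finset.coe_Iic]; exact injOn_two_pow_succ_sub_two_pow k),
      Nat.card_Iic]
  · refine succ_le_card_of_forall_exists_pow_dvd_not_dvd (p := 2) (by norm_num) fun m hm => ?_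
    exact exists_mem_dvd_not_dvd_of_arfClosure_eq hA ⟨m, hm, rfl⟩
      (Nat.dvd_sub (pow_dvd_pow 2 (by omega)) dvd_rfl)
      (not_two_pow_succ_dvd_two_pow_succ_sub_two_pow hm) (image_two_pow_succ_sub_two_pow_subset k m)
end

section
/- Let $S$ be an Arf numerical semigroup with multiplicity sequence $e_0, e_1, \ldots$, and let $S \subset S_1 \subset \cdots \subset S_n = \mathbb{N}$ be the chain of Arf semigroups with $S_{i+1} = (S_i \setminus \{0\}) - e_i$, where $n$ is minimal with $S_n = \mathbb{N}$. Then the Arf rank of $S$ (the cardinality of its minimal Arf system of generators) satisfies $\mathrm{Arfrank}(S) \leq n + 1$. -/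
theorem arfrank_le_chain_length (S : Set ℕ)
    (hS : IsNumericalSemigroup S) (hArf : IsArfNS S)
    (T : ℕ → Set ℕ) (m : ℕ → ℕ) (hT0 : T 0 = S)
    (hm : ∀ i, m i ∈ T i ∧ 0 < m i ∧ ∀ x ∈ T i, 0 < x → m i ≤ x)
    (hTsucc : ∀ i, T (i + 1) = (fun x => x - m i) '' (T i \ {0}))
    (n : ℕ) (hTn : T n = Set.univ) (hmin : ∀ j < n, T j ≠ Set.univ) :
    ∃ A : Finset ℕ, ArfClosure ↑A = S ∧ A.card ≤ n + 1 := by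
  set f : ℕ → ℕ := fun j => ∑ i ∈ Finset.range j, m i with hf
  have hfs : ∀ j, f (j + 1) = f j + m j := fun j => Finset.sum_range_succ _ _
  -- 0 is in every T i
  have hzero : ∀ i, 0 ∈ T i := by
    intro i
    induction i with
    | zero => rw [hT0]; exact hS.1
    | succ i ih =>
      rw [hTsucc]
      exact ⟨m i, ⟨(hm i).1, fun h => absurd h (by simpa using (hm i).2.1.ne')⟩,
        Nat.sub_self _⟩
  -- L1 : f j + x ∈ S for x ∈ T j
  have L1 : ∀ j, ∀ x ∈ T j, f j + x ∈ S := by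
    intro j
    induction j with
    | zero => intro x hx; simpa [hf, hT0] using hx
    | succ j ih =>
      intro x hx
      rw [hTsucc] at hx
      obtain ⟨y, ⟨hy, hy0⟩, rfl⟩ := hx
      have hy0' : 0 < y := Nat.pos_of_ne_zero (by simpa using hy0)
      have hmy : m j ≤ y := (hm j).2.2 y hy hy0'
      have : f (j + 1) + (y - m j) = f j + y := by rw [hfs]; omega
      rw [this]
      exact ih y hy
  -- L2 : x ∈ S, f j ≤ x → x - f j ∈ T j
  have L2 : ∀ j, ∀ x ∈ S, f j ≤ x → x - f j ∈ T j := by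
    intro j
    induction j with
    | zero => intro x hx _; simpa [hf, hT0] using hx
    | succ j ih =>
      intro x hx hle
      have hle' : f j ≤ x := by rw [hfs] at hle; omega
      have h1 : x - f j ∈ T j := ih x hx hle'
      have hpos : 0 < x - f j := by rw [hfs] at hle; have := (hm j).2.1; omega
      rw [hTsucc]
      refine ⟨x - f j, ⟨h1, by simpa using hpos.ne'⟩, ?_⟩
      show x - f j - m j = x - f (j + 1)
      rw [hfs]; omega
  -- members of S below f n are of the form f j
  have Lform : ∀ x ∈ S, x < f n → ∃ j < n, x = f j := by
    intro x hx hlt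
    classical
    set j := Nat.findGreatest (fun j => f j ≤ x) n with hj
    have hfj : f j ≤ x :=
      Nat.findGreatest_spec (P := fun j => f j ≤ x) (m := 0) (Nat.zero_le n) (by simp [hf])
    have hjn : j ≤ n := Nat.findGreatest_le n
    have hjlt : j < n := by
      rcases lt_or_eq_of_le hjn with h | h
      · exact h
      · exfalso; rw [h] at hfj; omega
    have hnot : ¬ f (j + 1) ≤ x :=
      Nat.findGreatest_is_greatest (P := fun j => f j ≤ x) (Nat.lt_succ_self j) hjlt
    have hmem : x - f j ∈ T j := L2 j x hx hfj
    have hsmall : x - f j < m j := by rw [hfs] at hnot; omega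
    have : x - f j = 0 := by
      by_contra h
      have := (hm j).2.2 _ hmem (Nat.pos_of_ne_zero h)
      omega
    exact ⟨j, hjlt, by omega⟩
  -- the generating set
  classical
  refine ⟨((Finset.range n).image (fun j => f (j + 1))) ∪ {f n + 1}, ?_, ?_⟩
  · -- ArfClosure = S
    have hAsub : ((((Finset.range n).image (fun j => f (j + 1))) ∪ {f n + 1} : Finset ℕ) : Set ℕ) ⊆ S := by
      intro x hx
      simp only [Finset.coe_union, Finset.coe_image, Finset.coe_range,
        Finset.coe_singleton, Set.mem_union, Set.mem_image, Set.mem_Iio,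
        Set.mem_singleton_iff] at hx
      rcases hx with ⟨j, _, rfl⟩ | rfl
      · have := L1 (j + 1) 0 (hzero (j + 1)); simpa using this
      · have : (1 : ℕ) ∈ T n := by rw [hTn]; trivial
        exact L1 n 1 this
    apply Set.Subset.antisymm
    · exact Set.sInter_subset_of_mem ⟨hS, hArf, hAsub⟩
    · intro x hx
      intro W hW
      obtain ⟨hWns, hWarf, hAW⟩ := hW
      have hfnW : f n ∈ W := by
        cases n with
        | zero => simpa [hf] using hWns.1
        | succ k =>
          apply hAW
          simp only [Finset.coe_union, Finset.coe_image, Finset.coe_range,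
            Set.mem_union, Set.mem_image, Set.mem_Iio]
          exact Or.inl ⟨k, Nat.lt_succ_self k, rfl⟩
      have h1W : f n + 1 ∈ W := by
        apply hAW
        simp
      have htail : ∀ k, f n + k ∈ W := by
        intro k
        induction k with
        | zero => simpa using hfnW
        | succ k ih =>
          have := hWarf (f n) hfnW (f n + k) ih (f n + 1) h1W
            (Nat.le_add_right _ _) (Nat.le_add_right _ _)
          have heq : f n + k + (f n + 1) - f n = f n + (k + 1) := by omega
          rwa [heq] at this
      rcases lt_or_ge x (f n) with hlt | hge
      · obtain ⟨j, hjlt, rfl⟩ := Lform x hx hlt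
        cases j with
        | zero => simpa [hf] using hWns.1
        | succ i =>
          apply hAW
          simp only [Finset.coe_union, Finset.coe_image, Finset.coe_range,
            Set.mem_union, Set.mem_image, Set.mem_Iio]
          exact Or.inl ⟨i, by omega, rfl⟩
      · have := htail (x - f n)
        rwa [Nat.add_sub_cancel' hge] at this
  · calc (((Finset.range n).image (fun j => f (j + 1))) ∪ {f n + 1}).card
        ≤ ((Finset.range n).image (fun j => f (j + 1))).card + 1 :=
          le_trans (Finset.card_union_le _ _) (by simp)
      _ ≤ n + 1 := by
          have := Finset.card_image_le (s := Finset.range n) (f := fun j => f (j + 1))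
          simpa using Nat.add_le_add_right (by simpa using this) 1
end

section
/- Let $S$ be a good local subsemigroup of $\mathbb{N}^2$ that is an Arf semigroup. Then each coordinate projection $S_j = \{\alpha_j : (\alpha_1,\alpha_2) \in S\}$ is an Arf numerical semigroup. -/
/-- A good subsemigroup of ℕ^d: contains 0, closed under addition and
componentwise minimum, satisfies the completion property, and contains
`δ + ℕ^d` for some `δ`. -/
def IsGoodSgp {d : ℕ} (S : Set (Fin d → ℕ)) : Prop :=
  (0 ∈ S) ∧ (∀ a ∈ S, ∀ b ∈ S, a + b ∈ S) ∧
  (∀ a ∈ S, ∀ b ∈ S, a ⊓ b ∈ S) ∧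
  (∀ a ∈ S, ∀ b ∈ S, a ≠ b → ∀ i, a i = b i →
    ∃ c ∈ S, a i < c i ∧ ∀ j, j ≠ i →
      (min (a j) (b j) ≤ c j ∧ (a j ≠ b j → c j = min (a j) (b j)))) ∧
  (∃ δ : Fin d → ℕ, ∀ x, δ ≤ x → x ∈ S)

/-- `S` is local: `0` is the only element with some coordinate equal to `0`. -/
def IsLocalSgp {d : ℕ} (S : Set (Fin d → ℕ)) : Prop :=
  ∀ a ∈ S, (∃ i, a i = 0) → a = 0

/-- `S ⊆ ℕ^d` is Arf: for every `α ∈ S`, the set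
`{β - α : β ∈ S, β ≥ α}` is closed under addition. -/
def IsArfSgp {d : ℕ} (S : Set (Fin d → ℕ)) : Prop :=
  ∀ s ∈ S, ∀ x ∈ S, ∀ y ∈ S, s ≤ x → s ≤ y → x + y - s ∈ S

theorem projections_of_arf_good_local_are_arf (S : Set (Fin 2 → ℕ))
    (hgood : IsGoodSgp S) (hloc : IsLocalSgp S) (harf : IsArfSgp S) :
    ∀ j : Fin 2,
      IsNumericalSemigroup ((fun a => a j) '' S) ∧
      IsArfNS ((fun a => a j) '' S) := by
  obtain ⟨h0, hadd, hmin, _hcompl, δ, hδ⟩ := hgood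
  intro j
  constructor
  · refine ⟨⟨0, h0, rfl⟩, ?_, ?_⟩
    · rintro a ⟨α, hα, rfl⟩ b ⟨β, hβ, rfl⟩
      exact ⟨α + β, hadd _ hα _ hβ, rfl⟩
    · apply Set.Finite.subset (Set.finite_Iio (δ j))
      intro n hn
      simp only [Set.mem_compl_iff, Set.mem_image, not_exists] at hn
      by_contra h
      simp only [Set.mem_Iio, not_lt] at h
      refine hn (Function.update δ j n) ⟨hδ _ fun i => ?_, Function.update_self j n δ⟩
      by_cases hi : i = j
      · subst hi; simpa using h
      · simp [Function.update_of_ne hi]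
  · rintro s ⟨α, hα, rfl⟩ x ⟨β, hβ, rfl⟩ y ⟨γ, hγ, rfl⟩ hsx hsy
    have hm : α ⊓ (β ⊓ γ) ∈ S := hmin _ hα _ (hmin _ hβ _ hγ)
    have hx : α j ≤ β j := hsx
    have hy : α j ≤ γ j := hsy
    have hmj : (α ⊓ (β ⊓ γ)) j = α j := by
      clear hsx hsy
      simp only [Pi.inf_apply]
      omega
    have h1 : α ⊓ (β ⊓ γ) ≤ β := le_trans inf_le_right inf_le_left
    have h2 : α ⊓ (β ⊓ γ) ≤ γ := le_trans inf_le_right inf_le_right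
    refine ⟨β + γ - α ⊓ (β ⊓ γ), harf _ hm β hβ γ hγ h1 h2, ?_⟩
    show (β + γ - α ⊓ (β ⊓ γ)) j = β j + γ j - α j
    simp [Pi.sub_apply, Pi.add_apply, hmj]
end

section
/- Finite intersections of Arf good subsemigroups of $\mathbb{N}^d$ having the same coordinate projections are again Arf good subsemigroups: if $S_1, S_2 \subseteq \mathbb{N}^d$ are Arf good local subsemigroups such that for each $j$ the $j$-th coordinate projections of $S_1$ and $S_2$ coincide, then $S_1 \cap S_2$ is an Arf good local subsemigroup of $\mathbb{N}^d$ with the same coordinate projections. -/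
/-!
For an Arf semigroup closed under `⊓`, the identity `a + b - a ⊓ b = a ⊔ b` gives closure
under `⊔`, and `w ↦ 2w - α` doubles the distance of an element `w ≥ α` from `α`. Hence on the
fiber of `α` over a set `F` of coordinates (the elements agreeing with `α` on `F`) every
coordinate is either constant or unbounded. The completion property makes "the fiber over `{f}`
is constant at `m`" a symmetric relation between `f` and `m`. Two consequences give the theorem.

The vector of the `t`-th elements of the coordinate projections lies in `S`: the fiber through a
point having the right `m`-th coordinate is unbounded in every coordinate it does not force, and
symmetry shows that the forced coordinates already lie strictly above the `t`-th level. This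
vector only depends on the projections, so it lies in `S₁ ∩ S₂`.

For the completion property of `S₁ ∩ S₂` at `a, b` and `i`, put `α = a ⊓ b`, let `D` be the set
where `a ≠ b`, and let `C ⊇ D` collect the `m` such that every common element agreeing with `α`
at `m` agrees with `α` somewhere on `D`. By symmetry, `C` contains all coordinates forced by the
fiber over `C` in either semigroup, and `a ⊔ b` shows `i ∉ C`. So the vector equal to `α` on
`C` and large elsewhere lies in both semigroups.
-/

lemma SupClosed.sup_finsetSup_mem {α ι : Type*} [SemilatticeSup α] [OrderBot α] {s : Set α}
    {t : Finset ι} {f : ι → α} {a : α} (hs : SupClosed s) (ha : a ∈ s)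
    (hf : ∀ i ∈ t, f i ∈ s) : a ⊔ t.sup f ∈ s :=
  Finset.sup_induction (p := fun x => a ⊔ x ∈ s) (by simpa using ha)
    (fun x hx y hy => sup_sup_distrib_left a x y ▸ hs hx hy) fun i hi => hs ha (hf i hi)

section
variable {d : ℕ} {S T : Set (Fin d → ℕ)}

lemma IsGoodSgp.zero_mem (h : IsGoodSgp S) : 0 ∈ S := h.1

lemma IsGoodSgp.add_mem (h : IsGoodSgp S) {a b : Fin d → ℕ} (ha : a ∈ S) (hb : b ∈ S) :
    a + b ∈ S :=
  h.2.1 a ha b hb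

lemma IsGoodSgp.infClosed (h : IsGoodSgp S) : InfClosed S :=
  fun a ha b hb => h.2.2.1 a ha b hb

lemma IsGoodSgp.exists_completion (h : IsGoodSgp S) {a b : Fin d → ℕ} (ha : a ∈ S)
    (hb : b ∈ S) (hab : a ≠ b) {i : Fin d} (hi : a i = b i) :
    ∃ c ∈ S, a i < c i ∧ ∀ j, j ≠ i →
      (min (a j) (b j) ≤ c j ∧ (a j ≠ b j → c j = min (a j) (b j))) :=
  h.2.2.2.1 a ha b hb hab i hi

lemma IsGoodSgp.exists_conductor (h : IsGoodSgp S) : ∃ δ : Fin d → ℕ, ∀ x, δ ≤ x → x ∈ S :=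
  h.2.2.2.2

lemma IsGoodSgp.infinite_image_eval (h : IsGoodSgp S) (j : Fin d) :
    ((fun a => a j) '' S).Infinite := by
  obtain ⟨δ, hδ⟩ := h.exists_conductor
  refine (Set.Ici_infinite (δ j)).mono fun n hn => ⟨Function.update δ j n, hδ _ ?_, by simp⟩
  exact le_update_iff.2 ⟨hn, fun _ _ => le_rfl⟩

lemma IsArfSgp.supClosed (ha : IsArfSgp S) (hinf : InfClosed S) : SupClosed S := by
  intro a haS b hbS
  convert ha _ (hinf haS hbS) a haS b hbS inf_le_left inf_le_right using 1
  funext m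
  simp only [Pi.sup_apply, Pi.add_apply, Pi.sub_apply, Pi.inf_apply]
  omega

lemma IsArfSgp.inter (h : IsArfSgp S) (h' : IsArfSgp T) : IsArfSgp (S ∩ T) :=
  fun s hs x hx y hy hsx hsy => ⟨h s hs.1 x hx.1 y hy.1 hsx hsy, h' s hs.2 x hx.2 y hy.2 hsx hsy⟩

lemma IsLocalSgp.mono (h : IsLocalSgp T) (hST : S ⊆ T) : IsLocalSgp S :=
  fun a ha => h a (hST ha)

end

namespace GoodSgp

variable {d : ℕ} {S T : Set (Fin d → ℕ)} {α : Fin d → ℕ} {F : Set (Fin d)} {j : Fin d} {t : ℕ}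

def fiber (S : Set (Fin d → ℕ)) (α : Fin d → ℕ) (F : Set (Fin d)) : Set (Fin d → ℕ) :=
  {w ∈ S | ∀ f ∈ F, w f = α f}

def forced (S : Set (Fin d → ℕ)) (α : Fin d → ℕ) (F : Set (Fin d)) : Set (Fin d) :=
  {m | ∀ w ∈ fiber S α F, w m = α m}

lemma mem_fiber_self (hα : α ∈ S) : α ∈ fiber S α F := ⟨hα, fun _ _ => rfl⟩

lemma subset_forced : F ⊆ forced S α F := fun _ hf _ hw => hw.2 _ hf

lemma supClosed_fiber (hS : SupClosed S) : SupClosed (fiber S α F) := by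
  rintro v ⟨hvS, hv⟩ w ⟨hwS, hw⟩
  refine ⟨hS hvS hwS, fun f hf => ?_⟩
  simp [hv f hf, hw f hf]

lemma exists_mem_fiber_lt_of_notMem_forced (hinf : InfClosed S) (ha : IsArfSgp S) (hα : α ∈ S)
    {m : Fin d} (hm : m ∉ forced S α F) : ∃ w ∈ fiber S α F, α ≤ w ∧ α m < w m := by
  simp only [forced, Set.mem_ofPred_eq, not_forall] at hm
  obtain ⟨w, ⟨hwS, hw⟩, hwm⟩ := hm
  rcases Nat.lt_or_gt_of_ne hwm with hlt | hgt
  · -- reflect `w` through `α`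
    refine ⟨α + α - α ⊓ w, ⟨ha _ (hinf hα hwS) α hα α hα inf_le_left inf_le_left,
      fun f hf => ?_⟩, fun k => ?_, ?_⟩ <;>
    simp only [Pi.add_apply, Pi.sub_apply, Pi.inf_apply] <;> grind
  · refine ⟨α ⊔ w, supClosed_fiber (ha.supClosed hinf) (mem_fiber_self hα) ⟨hwS, hw⟩, le_sup_left,
      lt_sup_of_lt_right hgt⟩

lemma exists_mem_fiber_le_of_notMem_forced (hinf : InfClosed S) (ha : IsArfSgp S) (hα : α ∈ S)
    {m : Fin d} (hm : m ∉ forced S α F) (N : ℕ) : ∃ w ∈ fiber S α F, α ≤ w ∧ N ≤ w m := by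
  suffices ∀ n, ∃ w ∈ fiber S α F, α ≤ w ∧ α m + n < w m from
    (this N).imp fun w ⟨hw, hαw, hwm⟩ => ⟨hw, hαw, by omega⟩
  intro n
  induction n with
  | zero => simpa using exists_mem_fiber_lt_of_notMem_forced hinf ha hα hm
  | succ n ih =>
    obtain ⟨w, ⟨hwS, hw⟩, hαw, hwm⟩ := ih
    -- `w ↦ 2w - α` doubles the distance to `α`
    refine ⟨w + w - α, ⟨ha α hα w hwS w hwS hαw hαw, fun f hf => ?_⟩, fun k => ?_, ?_⟩ <;>
    simp only [Pi.add_apply, Pi.sub_apply] <;> grind [Pi.le_def]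

lemma exists_mem_fiber_forall_le (hinf : InfClosed S) (ha : IsArfSgp S) (hα : α ∈ S) (N : ℕ) :
    ∃ c ∈ fiber S α F, α ≤ c ∧ ∀ m ∉ forced S α F, N ≤ c m := by
  have (m : Fin d) : ∃ w ∈ fiber S α F, α ≤ w ∧ (m ∉ forced S α F → N ≤ w m) := by
    by_cases hm : m ∈ forced S α F
    · exact ⟨α, mem_fiber_self hα, le_rfl, absurd hm⟩
    · obtain ⟨w, hw, hαw, hwm⟩ := exists_mem_fiber_le_of_notMem_forced hinf ha hα hm N
      exact ⟨w, hw, hαw, fun _ => hwm⟩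
  choose g hg _ hgN using this
  refine ⟨α ⊔ Finset.univ.sup g, (supClosed_fiber (ha.supClosed hinf)).sup_finsetSup_mem
    (mem_fiber_self hα) fun m _ => hg m, le_sup_left, fun m hm => ?_⟩
  exact (hgN m hm).trans (le_sup_of_le_right (Finset.le_sup (f := g) (Finset.mem_univ m)) m)

lemma exists_mem_forced_singleton_of_mem_forced (hg : IsGoodSgp S) (ha : IsArfSgp S)
    (hα : α ∈ S) {C : Set (Fin d)} (hC : C.Nonempty) {m : Fin d} (hm : m ∈ forced S α C) :
    ∃ f ∈ C, f ∈ forced S α {m} := by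
  by_cases hmC : m ∈ C
  · exact ⟨m, hmC, subset_forced rfl⟩
  by_contra! hnot
  obtain ⟨c, ⟨hcS, hcm⟩, -, hcC⟩ :=
    exists_mem_fiber_forall_le hg.infClosed ha hα (Finset.univ.sup α + 1) (F := {m})
  have hαC : ∀ f ∈ C, α f < c f := fun f hf =>
    (Finset.le_sup (f := α) (Finset.mem_univ f)).trans_lt (hcC f (hnot f hf))
  obtain ⟨f₀, hf₀⟩ := hC
  have hαc_ne : α ≠ c := fun h => (hαC f₀ hf₀).ne (congrFun h f₀)
  obtain ⟨ε, hεS, hεm, hε⟩ := hg.exists_completion hα hcS hαc_ne (hcm m rfl).symm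
  -- `ε` keeps the values of `α` on `C`, so it lies in the fiber over `C`, yet moves `m`
  have hεC : ε ∈ fiber S α C := ⟨hεS, fun f hf => by
    have := (hε f (fun h => hmC (h ▸ hf))).2 (hαC f hf).ne
    rw [this, min_eq_left (hαC f hf).le]⟩
  exact hεm.ne (hm ε hεC).symm

lemma mem_forced_singleton_comm (hg : IsGoodSgp S) (ha : IsArfSgp S) (hα : α ∈ S)
    {f m : Fin d} (h : m ∈ forced S α {f}) : f ∈ forced S α {m} := by
  obtain ⟨f', rfl, hf'⟩ := exists_mem_forced_singleton_of_mem_forced hg ha hα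
    (Set.singleton_nonempty f) h
  exact hf'

lemma piecewise_mem_of_forced_subset [DecidablePred (· ∈ F)] (hinf : InfClosed S)
    (ha : IsArfSgp S) (hα : α ∈ S) {H : Fin d → ℕ} (hH : H ∈ S) (hαH : α ≤ H)
    (hF : forced S α F ⊆ F) : F.piecewise α H ∈ S := by
  obtain ⟨c, ⟨hcS, hcF⟩, -, hc⟩ := exists_mem_fiber_forall_le hinf ha hα (Finset.univ.sup H)
  convert hinf hcS hH using 1
  funext m
  by_cases hm : m ∈ F
  · simp [hm, hcF m hm, hαH m]
  · have : H m ≤ c m := (Finset.le_sup (f := H) (Finset.mem_univ m)).trans (hc m (hm <| hF ·))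
    simp [hm, this]

def tieSet (S : Set (Fin d → ℕ)) (α : Fin d → ℕ) (D : Set (Fin d)) : Set (Fin d) :=
  D ∪ {m | ∀ w ∈ S, w m = α m → ∃ j ∈ D, w j = α j}

lemma forced_subset_tieSet (hg : IsGoodSgp T) (ha : IsArfSgp T) (hα : α ∈ T) (hST : S ⊆ T)
    {D : Set (Fin d)} (hD : D.Nonempty) : forced T α (tieSet S α D) ⊆ tieSet S α D := by
  intro m hm
  obtain ⟨f, hf, hfm⟩ := exists_mem_forced_singleton_of_mem_forced hg ha hα
    (hD.mono Set.subset_union_left) hm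
  refine Or.inr fun w hw hwm => ?_
  have hwf : w f = α f := hfm w ⟨hST hw, fun _ h => h ▸ hwm⟩
  rcases hf with hfD | hf
  · exact ⟨f, hfD, hwf⟩
  · exact hf w hw hwf

lemma exists_completion_inter {S₁ S₂ : Set (Fin d → ℕ)} (h₁g : IsGoodSgp S₁)
    (h₁a : IsArfSgp S₁) (h₂g : IsGoodSgp S₂) (h₂a : IsArfSgp S₂) {a b : Fin d → ℕ}
    (ha : a ∈ S₁ ∩ S₂) (hb : b ∈ S₁ ∩ S₂) (hab : a ≠ b) {i : Fin d} (hi : a i = b i) :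
    ∃ c ∈ S₁ ∩ S₂, a i < c i ∧ ∀ j, j ≠ i →
      (min (a j) (b j) ≤ c j ∧ (a j ≠ b j → c j = min (a j) (b j))) := by
  classical
  set α := a ⊓ b
  set D : Set (Fin d) := {j | a j ≠ b j}
  set C := tieSet (S₁ ∩ S₂) α D
  have hD : D.Nonempty := Function.ne_iff.1 hab
  have hα₁ : α ∈ S₁ := h₁g.infClosed ha.1 hb.1
  have hα₂ : α ∈ S₂ := h₂g.infClosed ha.2 hb.2
  -- `a ⊔ b` agrees with `α` at `i` but nowhere on `D`
  have hiC : i ∉ C := by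
    rintro (hiD | hiC)
    · exact hiD hi
    obtain ⟨j, hjD, hj⟩ := hiC (a ⊔ b)
      ⟨h₁a.supClosed h₁g.infClosed ha.1 hb.1, h₂a.supClosed h₂g.infClosed ha.2 hb.2⟩
      (by simp [α, hi])
    simp only [Pi.sup_apply, Pi.inf_apply, α] at hj
    exact hjD (by omega)
  obtain ⟨δ₁, hδ₁⟩ := h₁g.exists_conductor
  obtain ⟨δ₂, hδ₂⟩ := h₂g.exists_conductor
  set H : Fin d → ℕ := δ₁ + δ₂ + α + 1
  have hαH : α ≤ H := fun j => by simp [H]; omega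
  have hε₁ : C.piecewise α H ∈ S₁ :=
    piecewise_mem_of_forced_subset h₁g.infClosed h₁a hα₁ (hδ₁ H fun j => by simp [H]; omega)
      hαH (forced_subset_tieSet h₁g h₁a hα₁ Set.inter_subset_left hD)
  have hε₂ : C.piecewise α H ∈ S₂ :=
    piecewise_mem_of_forced_subset h₂g.infClosed h₂a hα₂ (hδ₂ H fun j => by simp [H]; omega)
      hαH (forced_subset_tieSet h₂g h₂a hα₂ Set.inter_subset_right hD)
  refine ⟨C.piecewise α H, ⟨hε₁, hε₂⟩, ?_, fun j _ => ?_⟩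
  · simp [hiC, H, α]
    omega
  by_cases hjC : j ∈ C
  · simp [hjC, α]
  · have hjD : a j = b j := not_not.1 fun h => hjC (Or.inl h)
    simp [hjC, H, α, hjD]
    omega

noncomputable def projNth (S : Set (Fin d → ℕ)) (t : ℕ) : Fin d → ℕ :=
  fun j => Nat.nth (· ∈ (fun a => a j) '' S) t

lemma projNth_zero (h0 : 0 ∈ S) : projNth S 0 = 0 :=
  funext fun _ => Nat.nth_zero_of_zero ⟨0, h0, rfl⟩

lemma projNth_lt_succ (h : ((fun a => a j) '' S).Infinite) :
    projNth S t j < projNth S (t + 1) j :=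
  Nat.nth_strictMono h (Nat.lt_succ_self t)

lemma exists_mem_apply_eq_projNth (h : ((fun a => a j) '' S).Infinite) (t : ℕ) :
    ∃ x ∈ S, x j = projNth S t j :=
  Nat.nth_mem_of_infinite h t

lemma projNth_succ_le {x : Fin d → ℕ} (hx : x ∈ S) (hlt : projNth S t j < x j) :
    projNth S (t + 1) j ≤ x j :=
  le_of_not_gt fun h => (Nat.le_nth_of_lt_nth_succ h ⟨x, hx, rfl⟩).not_gt hlt

lemma exists_projNth_eq {x : Fin d → ℕ} (hx : x ∈ S) : ∃ t, projNth S t j = x j := by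
  classical
  exact ⟨_, Nat.nth_count ⟨x, hx, rfl⟩⟩

lemma exists_mem_projNth_succ_le (hg : IsGoodSgp S) (ha : IsArfSgp S) (ht : projNth S t ∈ S)
    (m : Fin d) : ∃ r ∈ S, projNth S (t + 1) ≤ r ∧ r m = projNth S (t + 1) m := by
  set e := projNth S t
  set e' := projNth S (t + 1)
  have hinf := hg.infinite_image_eval (S := S)
  obtain ⟨w, hwS, hwm⟩ := exists_mem_apply_eq_projNth (hinf m) (t + 1)
  set u := w ⊔ e
  have huS : u ∈ S := ha.supClosed hg.infClosed hwS ht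
  have hum : u m = e' m := (sup_eq_left.2 (hwm ▸ (projNth_lt_succ (hinf m)).le)).trans hwm
  have he'u : ∀ f ∈ forced S u {m}, e' f ≤ u f := by
    intro f hf
    refine projNth_succ_le huS (lt_of_le_of_ne (le_sup_right (a := w) f) fun hef => ?_)
    -- by symmetry of forcing, `e` (which agrees with `u` at `f`) would agree with `u` at `m`
    have hem := mem_forced_singleton_comm hg ha huS hf e ⟨ht, fun _ h => h ▸ hef⟩
    exact (projNth_lt_succ (hinf m)).ne (hem.trans hum)
  obtain ⟨c, ⟨hcS, hcm⟩, huc, hc⟩ :=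
    exists_mem_fiber_forall_le hg.infClosed ha huS (Finset.univ.sup e') (F := {m})
  refine ⟨c, hcS, fun f => ?_, (hcm m rfl).trans hum⟩
  by_cases hf : f ∈ forced S u {m}
  · exact (he'u f hf).trans (huc f)
  · exact (Finset.le_sup (f := e') (Finset.mem_univ f)).trans (hc f hf)

lemma projNth_mem (hg : IsGoodSgp S) (ha : IsArfSgp S) (t : ℕ) : projNth S t ∈ S := by
  induction t with
  | zero => simpa [projNth_zero hg.zero_mem] using hg.zero_mem
  | succ t ih =>
    rcases isEmpty_or_nonempty (Fin d) with _ | _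
    · exact Subsingleton.elim 0 (projNth S (t + 1)) ▸ hg.zero_mem
    choose r hrS hr hrm using exists_mem_projNth_succ_le hg ha ih
    convert hg.infClosed.finsetInf'_mem Finset.univ_nonempty fun m _ => hrS m
    funext f
    rw [Finset.inf'_apply]
    exact le_antisymm (Finset.le_inf' _ _ fun m _ => hr m f)
      ((Finset.inf'_le _ (Finset.mem_univ f)).trans_eq (hrm f))

lemma image_eval_inter {S₁ S₂ : Set (Fin d → ℕ)} (h₁g : IsGoodSgp S₁) (h₁a : IsArfSgp S₁)
    (h₂g : IsGoodSgp S₂) (h₂a : IsArfSgp S₂)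
    (hproj : ∀ j : Fin d, (fun a => a j) '' S₁ = (fun a => a j) '' S₂) :
    (fun a => a j) '' (S₁ ∩ S₂) = (fun a => a j) '' S₁ := by
  refine (Set.image_mono Set.inter_subset_left).antisymm ?_
  rintro _ ⟨x, hx, rfl⟩
  obtain ⟨t, ht⟩ := exists_projNth_eq (j := j) hx
  have h₁₂ : projNth S₁ t = projNth S₂ t := funext fun m => by simp only [projNth, hproj m]
  exact ⟨projNth S₁ t, ⟨projNth_mem h₁g h₁a t, h₁₂ ▸ projNth_mem h₂g h₂a t⟩, ht⟩

end GoodSgp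

lemma IsGoodSgp.inter_of_isArfSgp {d : ℕ} {S₁ S₂ : Set (Fin d → ℕ)} (h₁g : IsGoodSgp S₁)
    (h₁a : IsArfSgp S₁) (h₂g : IsGoodSgp S₂) (h₂a : IsArfSgp S₂) : IsGoodSgp (S₁ ∩ S₂) := by
  obtain ⟨δ₁, hδ₁⟩ := h₁g.exists_conductor
  obtain ⟨δ₂, hδ₂⟩ := h₂g.exists_conductor
  exact ⟨⟨h₁g.zero_mem, h₂g.zero_mem⟩,
    fun a ha b hb => ⟨h₁g.add_mem ha.1 hb.1, h₂g.add_mem ha.2 hb.2⟩,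
    fun a ha b hb => ⟨h₁g.infClosed ha.1 hb.1, h₂g.infClosed ha.2 hb.2⟩,
    fun a ha b hb hab i hi => GoodSgp.exists_completion_inter h₁g h₁a h₂g h₂a ha hb hab hi,
    δ₁ ⊔ δ₂, fun x hx => ⟨hδ₁ x (le_sup_left.trans hx), hδ₂ x (le_sup_right.trans hx)⟩⟩

theorem intersection_of_arf_good_semigroups_general (d : ℕ) (S1 S2 : Set (Fin d → ℕ))
    (h1g : IsGoodSgp S1) (h1l : IsLocalSgp S1) (h1a : IsArfSgp S1)
    (h2g : IsGoodSgp S2) (h2a : IsArfSgp S2)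
    (hproj : ∀ j : Fin d, (fun a => a j) '' S1 = (fun a => a j) '' S2) :
    IsGoodSgp (S1 ∩ S2) ∧ IsLocalSgp (S1 ∩ S2) ∧ IsArfSgp (S1 ∩ S2) ∧
    ∀ j : Fin d, (fun a => a j) '' (S1 ∩ S2) = (fun a => a j) '' S1 :=
  ⟨h1g.inter_of_isArfSgp h1a h2g h2a, h1l.mono Set.inter_subset_left, h1a.inter h2a,
    fun _ => GoodSgp.image_eval_inter h1g h1a h2g h2a hproj⟩

theorem intersection_of_arf_good_semigroups (d : ℕ) (S1 S2 : Set (Fin d → ℕ))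
    (h1g : IsGoodSgp S1) (h1l : IsLocalSgp S1) (h1a : IsArfSgp S1)
    (h2g : IsGoodSgp S2) (h2l : IsLocalSgp S2) (h2a : IsArfSgp S2)
    (hproj : ∀ j : Fin d, (fun a => a j) '' S1 = (fun a => a j) '' S2) :
    IsGoodSgp (S1 ∩ S2) ∧ IsLocalSgp (S1 ∩ S2) ∧ IsArfSgp (S1 ∩ S2) ∧
    ∀ j : Fin d, (fun a => a j) '' (S1 ∩ S2) = (fun a => a j) '' S1 :=
  intersection_of_arf_good_semigroups_general d S1 S2 h1g h1l h1a h2g h2a hproj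
end
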